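/- Let M:(ℝ,≤)²→vect_F be a persistence module admitting a finite convex isotopy subdivision of (ℝ,≤)² subordinate to M, with set of chambers {J_p | p ∈ P}. Define a relation → on P by p → q iff p = q, or p ≠ q and there exist x ∈ J_p and y ∈ J_q with x ≤ y. Then the transitive closure ≤ of → is a partial order on P; in particular, if p → q and q → p then p = q. -/

import Mathlib

/-- A persistence module over a preorder `P` with coefficients in a field `F`:
a functor `(P,≤) → Vect_F`, given by vector spaces `V p` and linear maps
`map : i ≤ j → (V i →ₗ[F] V j)` satisfying the functoriality equations. -/
structure PersistenceModule (F : Type) [Field F] (P : Type) [Preorder P] where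
  V : P → Type
  [addCommGroup : ∀ p, AddCommGroup (V p)]
  [module : ∀ p, Module F (V p)]
  map : ∀ {i j : P}, i ≤ j → (V i →ₗ[F] V j)
  map_id : ∀ i : P, map (le_refl i) = LinearMap.id
  map_comp : ∀ {i j k : P} (hij : i ≤ j) (hjk : j ≤ k),
    (map hjk).comp (map hij) = map (hij.trans hjk)

attribute [instance] PersistenceModule.addCommGroup PersistenceModule.module

/-- A zigzag path `a - x₁ - ⋯ - xₙ - b` in a preorder, where each consecutive
pair of points is comparable. -/
inductive Zigzag (P : Type) [Preorder P] : P → P → Type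
  | single (a : P) : Zigzag P a a
  | consLe {a b c : P} (h : a ≤ b) (p : Zigzag P b c) : Zigzag P a c
  | consGe {a b c : P} (h : b ≤ a) (p : Zigzag P b c) : Zigzag P a c

/-- Convexity of a subset of a poset: `i ≤ j ≤ k` with `i, k ∈ J` implies `j ∈ J`. -/
def PosetConvex {P : Type} [Preorder P] (J : Set P) : Prop :=
  ∀ i ∈ J, ∀ k ∈ J, ∀ j : P, i ≤ j → j ≤ k → j ∈ J

/-- Connectedness: any two points of `J` are joined by a finite zigzag path inside `J`. -/
def ZigzagConnected {P : Type} [Preorder P] (J : Set P) : Prop :=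
  ∀ a b : J, Nonempty (Zigzag (↥J) a b)

/-- The relation `p → q` between chambers of a subdivision `j ↦ C j`:
`p → q` iff `p = q`, or `p ≠ q` and there are `x ∈ J_p`, `y ∈ J_q` with `x ≤ y`. -/
def chamberRel (C : ℝ × ℝ → Set (ℝ × ℝ)) : Set (ℝ × ℝ) → Set (ℝ × ℝ) → Prop :=
  fun A B => A ∈ Set.range C ∧ B ∈ Set.range C ∧
    (A = B ∨ (A ≠ B ∧ ∃ x ∈ A, ∃ y ∈ B, x ≤ y))

/-!
Call a sequence of points a fence if each of its steps goes up in the product order, or goes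
down inside a single chamber. By zigzag connectivity, chambers `A → ⋯ → B → ⋯ → A` yield a closed
fence through a point of `A` and a point of `B`, so it suffices to show that every closed fence
stays in one chamber. This goes by induction on its length. If two consecutive steps can be
merged into one, drop the point between them; order-convexity of the chambers puts it in the
chamber of its neighbours. Otherwise up- and down-steps alternate. Take a valley `x` with minimal
first coordinate, preceded by `a ≤ p ≥ x` and followed by `x ≤ q ≥ b`. The corners `(a.1, x.2)`
and `(b.1, x.2)` lie in the chambers of `p` and `q` by convexity, and since they lie on one
horizontal line they are comparable; so `a ≤ p ≥ x ≤ q ≥ b` can be replaced by three steps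
through the same chambers.
-/

open Function Relation

section CyclicChain

variable {α : Type*} {r : α → α → Prop}

theorem Function.Periodic.forall_of_forall_lt_add {g : ℕ → α} {n : ℕ} {p : α → Prop}
    (hg : Periodic g n) (hn : 0 < n) (k : ℕ) (h : ∀ j < n, p (g (j + k))) (i : ℕ) :
    p (g i) := by
  have hk : k ≤ i + k * n := le_add_left (Nat.le_mul_of_pos_right k hn)
  have := h ((i + k * n - k) % n) (Nat.mod_lt _ hn)
  rwa [(hg.add_const k).map_mod_nat, Nat.sub_add_cancel hk, ← Nat.cast_id k, hg.nat_mul k]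
    at this

theorem Function.Periodic.exists_ge_forall_le {γ : Type*} [LinearOrder γ] {p : ℕ → Prop}
    {u : ℕ → γ} {n : ℕ} (hp : Periodic p n) (hu : Periodic u n) (hn : 0 < n) (h : ∃ k, p k)
    (k₀ : ℕ) : ∃ k, k₀ ≤ k ∧ p k ∧ ∀ j, p j → u k ≤ u j := by
  classical
  obtain ⟨k, hk⟩ := h
  obtain ⟨j₀, hj₀, hmin⟩ := ((Finset.range n).filter p).exists_min_image u
    ⟨k % n, by simpa [Nat.mod_lt _ hn, hp.map_mod_nat] using hk⟩
  simp only [Finset.mem_filter, Finset.mem_range] at hj₀ hmin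
  have hpk := hp.nat_mul k₀ j₀
  have huk := hu.nat_mul k₀ j₀
  rw [Nat.cast_id] at hpk huk
  refine ⟨j₀ + k₀ * n, le_add_left (Nat.le_mul_of_pos_right k₀ hn), hpk ▸ hj₀.2,
    fun j hj => ?_⟩
  rw [huk, ← hu.map_mod_nat j]
  exact hmin _ ⟨Nat.mod_lt _ hn, by rwa [hp.map_mod_nat]⟩

theorem Relation.ReflTransGen.exists_path_extension {a b : α} (h : ReflTransGen r a b)
    (f : ℕ → α) (n : ℕ) (hfn : f n = a) (hf : ∀ i < n, r (f i) (f (i + 1))) :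
    ∃ (N : ℕ) (f' : ℕ → α), n ≤ N ∧ (∀ i ≤ n, f' i = f i) ∧ f' N = b ∧
      ∀ i < N, r (f' i) (f' (i + 1)) := by
  induction h with
  | refl => exact ⟨n, f, le_rfl, fun _ _ => rfl, hfn, hf⟩
  | @tail b c _ hbc ih =>
    obtain ⟨N, f', hnN, hext, hfN, hf'⟩ := ih
    refine ⟨N + 1, fun i => if i ≤ N then f' i else c, by omega, fun i hi => ?_, by simp,
      fun i hi => ?_⟩
    · simp [show i ≤ N by omega, hext i hi]
    · rcases Nat.lt_or_eq_of_le (Nat.lt_succ_iff.mp hi) with hi | rfl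
      · simpa [show i ≤ N by omega, show i + 1 ≤ N by omega] using hf' i hi
      · simpa [hfN] using hbc

structure IsCyclicChain (r : α → α → Prop) (n : ℕ) (g : ℕ → α) : Prop where
  periodic : Periodic g n
  rel : ∀ i, r (g i) (g (i + 1))

namespace IsCyclicChain

theorem of_closed_path {f : ℕ → α} {n : ℕ} (hn : 0 < n) (hf : ∀ i < n, r (f i) (f (i + 1)))
    (hclosed : f n = f 0) : IsCyclicChain r n (fun i => f (i % n)) where
  periodic i := by simp
  rel i := by
    have hi := hf (i % n) (Nat.mod_lt i hn)
    rw [← Nat.mod_add_mod]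
    rcases Nat.lt_or_ge (i % n + 1) n with hlt | hge
    · rwa [Nat.mod_eq_of_lt hlt]
    · have hwrap : i % n + 1 = n := le_antisymm (Nat.mod_lt i hn) hge
      rw [hwrap, Nat.mod_self, ← hclosed]
      rwa [hwrap] at hi

theorem apply_eq_of_closed_path {γ : Type*} {φ : α → γ} {f : ℕ → α} {n : ℕ}
    (h : ∀ g, IsCyclicChain r n g → ∀ i, φ (g i) = φ (g 0)) (hn : 0 < n)
    (hf : ∀ i < n, r (f i) (f (i + 1))) (hclosed : f n = f 0) {j : ℕ} (hj : j ≤ n) :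
    φ (f j) = φ (f 0) := by
  rcases hj.lt_or_eq with hj | rfl
  · simpa [Nat.mod_eq_of_lt hj, Nat.zero_mod] using h _ (of_closed_path hn hf hclosed) j
  · rw [hclosed]

theorem exists_of_reflTransGen {a b : α} (hab : a ≠ b) (h₁ : ReflTransGen r a b)
    (h₂ : ReflTransGen r b a) :
    ∃ n g k, 0 < n ∧ IsCyclicChain r n g ∧ g 0 = a ∧ g k = b := by
  obtain ⟨N₁, f₁, -, hf₁0, hf₁N, hf₁⟩ := h₁.exists_path_extension (fun _ => a) 0 rfl (by simp)
  obtain ⟨N₂, f₂, hN, hf₂₁, hf₂N, hf₂⟩ := h₂.exists_path_extension f₁ N₁ hf₁N hf₁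
  have h0 : f₂ 0 = a := (hf₂₁ 0 (Nat.zero_le _)).trans (hf₁0 0 le_rfl)
  have hN₁ : f₂ N₁ = b := (hf₂₁ N₁ le_rfl).trans hf₁N
  have hlt : N₁ < N₂ := lt_of_le_of_ne hN fun h => hab (hf₂N.symm.trans (h ▸ hN₁))
  refine ⟨N₂, _, N₁, by omega, of_closed_path (by omega) hf₂ (hf₂N.trans h0.symm), ?_, ?_⟩
  · simpa using h0
  · simpa [Nat.mod_eq_of_lt hlt] using hN₁

end IsCyclicChain

end CyclicChain

section Fence

variable {P ι : Type*} [Preorder P] {κ : P → ι}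

def FenceStep (κ : P → ι) (a b : P) : Prop :=
  a ≤ b ∨ (b ≤ a ∧ κ a = κ b)

theorem label_eq_of_le_of_le (hκ : ∀ c, (κ ⁻¹' {c}).OrdConnected) {a b c : P} (hab : a ≤ b)
    (hbc : b ≤ c) (hac : κ a = κ c) : κ b = κ a :=
  (hκ (κ a)).out rfl hac.symm ⟨hab, hbc⟩

theorem FenceStep.label_eq_of_label_eq (hκ : ∀ c, (κ ⁻¹' {c}).OrdConnected) {a b c : P}
    (hab : FenceStep κ a b) (hbc : FenceStep κ b c) (hac : κ a = κ c) : κ b = κ a := by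
  rcases hab with hab | ⟨-, hab⟩
  · rcases hbc with hbc | ⟨-, hbc⟩
    · exact label_eq_of_le_of_le hκ hab hbc hac
    · exact hbc.trans hac.symm
  · exact hab.symm

theorem fenceStep_alternates {g : ℕ → P} (hrel : ∀ k, FenceStep κ (g k) (g (k + 1)))
    (hns : ∀ k, ¬FenceStep κ (g k) (g (k + 2))) (k : ℕ) :
    g (k + 1) ≤ g (k + 2) ↔ ¬g k ≤ g (k + 1) := by
  refine ⟨fun h₂ h₁ => hns k (Or.inl (h₁.trans h₂)), fun h₁ => by_contra fun h₂ => ?_⟩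
  obtain ⟨h₁, e₁⟩ := (hrel k).resolve_left h₁
  obtain ⟨h₂, e₂⟩ := (hrel (k + 1)).resolve_left h₂
  exact hns k (Or.inr ⟨h₂.trans h₁, e₁.trans e₂⟩)

theorem IsCyclicChain.label_eq_of_shortcut (hκ : ∀ c, (κ ⁻¹' {c}).OrdConnected) {m : ℕ}
    {g : ℕ → P} (hg : IsCyclicChain (FenceStep κ) (m + 2) g) {k : ℕ}
    (hk : FenceStep κ (g k) (g (k + 2)))
    (ih : ∀ f, IsCyclicChain (FenceStep κ) (m + 1) f → ∀ i, κ (f i) = κ (f 0)) (i : ℕ) :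
    κ (g i) = κ (g 0) := by
  let f : ℕ → P := fun j => if j = 0 then g k else g (j + 1 + k)
  have hf : ∀ j < m + 1, FenceStep κ (f j) (f (j + 1)) := by
    rintro (_ | j) -
    · simpa [f, add_comm k] using hk
    · simpa [f, add_right_comm _ 1 k] using hg.rel (j + 1 + 1 + k)
  have hclosed : f (m + 1) = f 0 := by
    simpa [f, show m + 1 + 1 + k = k + (m + 2) by omega] using hg.periodic k
  have hf_label : ∀ j ≤ m + 1, κ (f j) = κ (g k) :=
    fun j hj => IsCyclicChain.apply_eq_of_closed_path ih m.succ_pos hf hclosed hj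
  have hlabel : ∀ j < m + 2, κ (g (j + k)) = κ (g k) := by
    have h2 : κ (g (k + 2)) = κ (g k) := by
      simpa [f, show 1 + 1 + k = k + 2 by omega] using hf_label 1 (by omega)
    rintro (_ | _ | j) hj
    · simp
    · rw [zero_add, add_comm]
      exact (hg.rel k).label_eq_of_label_eq hκ (hg.rel (k + 1)) h2.symm
    · simpa [f, show j + 1 + 1 + k = j + 2 + k by omega] using hf_label (j + 1) (by omega)
  have hall := hg.periodic.forall_of_forall_lt_add (p := fun x => κ x = κ (g k)) (by omega) k
    hlabel
  exact (hall i).trans (hall 0).symm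

theorem IsCyclicChain.label_eq_of_detour {m : ℕ} {g : ℕ → P}
    (hg : IsCyclicChain (FenceStep κ) (m + 4) g)
    (ih : ∀ f, IsCyclicChain (FenceStep κ) (m + 3) f → ∀ i, κ (f i) = κ (f 0)) {w : ℕ} {y z : P}
    (hy : g w ≤ y) (hy₁ : κ (g (w + 1)) = κ y) (hy₂ : κ (g (w + 2)) = κ y)
    (hyz : FenceStep κ y z) (hz : g (w + 4) ≤ z) (hz₃ : κ (g (w + 3)) = κ z)
    (hz₄ : κ (g (w + 4)) = κ z) (i : ℕ) : κ (g i) = κ (g 0) := by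
  let f : ℕ → P
    | 0 => g w
    | 1 => y
    | 2 => z
    | j + 3 => g (j + w + 4)
  have hf : ∀ j < m + 3, FenceStep κ (f j) (f (j + 1))
    | 0, _ => Or.inl hy
    | 1, _ => hyz
    | 2, _ => Or.inr ⟨by simpa [f] using hz, by simpa [f] using hz₄.symm⟩
    | j + 3, _ => by simpa [f, add_right_comm j 1] using hg.rel (j + w + 4)
  have hclosed : f (m + 3) = f 0 := by
    simpa [f, show m + w + 4 = w + (m + 4) by omega] using hg.periodic w
  have hf_label : ∀ j ≤ m + 3, κ (f j) = κ (g w) :=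
    fun j hj => IsCyclicChain.apply_eq_of_closed_path ih (by omega) hf hclosed hj
  have hlabel : ∀ j < m + 4, κ (g (j + w)) = κ (g w)
    | 0, _ => by simp
    | 1, _ => by simpa [add_comm 1 w, f, hy₁] using hf_label 1 (by omega)
    | 2, _ => by simpa [add_comm 2 w, f, hy₂] using hf_label 1 (by omega)
    | 3, _ => by simpa [add_comm 3 w, f, hz₃] using hf_label 2 (by omega)
    | j + 4, _ => by simpa [f, add_right_comm j 4 w] using hf_label (j + 3) (by omega)
  have hall := hg.periodic.forall_of_forall_lt_add (p := fun x => κ x = κ (g w)) (by omega) w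
    hlabel
  exact (hall i).trans (hall 0).symm

end Fence

section Plane

variable {α β ι : Type*} [LinearOrder α] [LinearOrder β] {κ : α × β → ι}

theorem exists_fenceStep_detour (hκ : ∀ c, (κ ⁻¹' {c}).OrdConnected) {a p x q b : α × β}
    (hap : a ≤ p) (hxp : x ≤ p) (hκp : κ p = κ x) (hxq : x ≤ q) (hbq : b ≤ q)
    (hκq : κ q = κ b) (hxa : ¬x ≤ a) (hxb : ¬x ≤ b) (ha : x.1 ≤ a.1) (hb : x.1 ≤ b.1) :
    ∃ y z, a ≤ y ∧ κ y = κ x ∧ FenceStep κ y z ∧ b ≤ z ∧ κ z = κ b := by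
  have hay : a.2 ≤ x.2 := (lt_of_not_ge fun h => hxa ⟨ha, h⟩).le
  have hbz : b.2 ≤ x.2 := (lt_of_not_ge fun h => hxb ⟨hb, h⟩).le
  have hy : κ (a.1, x.2) = κ x :=
    label_eq_of_le_of_le hκ (⟨ha, le_rfl⟩ : x ≤ (a.1, x.2)) ⟨hap.1, hxp.2⟩ hκp.symm
  have hz : κ (b.1, x.2) = κ b :=
    label_eq_of_le_of_le hκ (⟨le_rfl, hbz⟩ : b ≤ (b.1, x.2)) ⟨hbq.1, hxq.2⟩ hκq.symm
  refine ⟨(a.1, x.2), (b.1, x.2), ⟨le_rfl, hay⟩, hy, ?_, ⟨le_rfl, hbz⟩, hz⟩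
  rcases le_total a.1 b.1 with hab | hba
  · exact Or.inl ⟨hab, le_rfl⟩
  · refine Or.inr ⟨⟨hba, le_rfl⟩, ?_⟩
    rw [hy, ← label_eq_of_le_of_le hκ (⟨hb, le_rfl⟩ : x ≤ (b.1, x.2))
      (⟨hba, le_rfl⟩ : (b.1, x.2) ≤ (a.1, x.2)) hy.symm]

theorem IsCyclicChain.label_eq_of_no_shortcut (hκ : ∀ c, (κ ⁻¹' {c}).OrdConnected) {m : ℕ}
    {g : ℕ → α × β} (hg : IsCyclicChain (FenceStep κ) (m + 2) g)
    (hns : ∀ k, ¬FenceStep κ (g k) (g (k + 2)))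
    (ih : ∀ f, IsCyclicChain (FenceStep κ) (m + 1) f → ∀ i, κ (f i) = κ (f 0)) (i : ℕ) :
    κ (g i) = κ (g 0) := by
  have alt := fenceStep_alternates hg.rel hns
  have down : ∀ k, ¬g k ≤ g (k + 1) → g (k + 1) ≤ g k ∧ κ (g k) = κ (g (k + 1)) :=
    fun k h => (hg.rel k).resolve_left h
  obtain ⟨v, hv, hup, hmin⟩ := Periodic.exists_ge_forall_le (p := fun k => g k ≤ g (k + 1))
    (u := fun k => (g k).1) (n := m + 2)
    (fun k => by simp only [add_right_comm k, hg.periodic _])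
    (fun k => by simp only [hg.periodic k]) (by omega)
    (by by_cases h : g 0 ≤ g 1; exacts [⟨0, h⟩, ⟨1, (alt 0).mpr h⟩]) 2
  obtain ⟨w, rfl⟩ := Nat.exists_eq_add_of_le' hv
  have hnup1 : ¬g (w + 1) ≤ g (w + 2) := (alt (w + 1)).mp hup
  have hup0 : g w ≤ g (w + 1) := not_not.mp fun h => hnup1 ((alt w).mpr h)
  have hnup3 : ¬g (w + 3) ≤ g (w + 4) := fun h => (alt (w + 2)).mp h hup
  have hup4 : g (w + 4) ≤ g (w + 5) := (alt (w + 3)).mpr hnup3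
  obtain ⟨hxp, hκp⟩ := down (w + 1) hnup1
  obtain ⟨hbq, hκq⟩ := down (w + 3) hnup3
  rcases m with _ | _ | m
  · exact absurd (Or.inl (hg.periodic w ▸ le_rfl)) (hns w)
  · exact (hnup3 (by simpa only [hg.periodic w, hg.periodic (w + 1)] using hup0)).elim
  obtain ⟨y, z, hay, hy, hyz, hbz, hz⟩ := exists_fenceStep_detour hκ hup0 hxp hκp hup hbq hκq
    (fun h => hns w (Or.inr ⟨h, label_eq_of_le_of_le hκ h hup0 hκp.symm⟩))
    (fun h => hns (w + 2) (Or.inl h)) (hmin w hup0) (hmin (w + 4) hup4)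
  exact hg.label_eq_of_detour ih hay (hκp.trans hy.symm) hy.symm hyz hbz (hκq.trans hz.symm)
    hz.symm i

theorem IsCyclicChain.label_eq (hκ : ∀ c, (κ ⁻¹' {c}).OrdConnected) :
    ∀ {n : ℕ} {g : ℕ → α × β}, IsCyclicChain (FenceStep κ) n g → 0 < n →
      ∀ i, κ (g i) = κ (g 0)
  | 1, g, hg, _ => fun i => by rw [← hg.periodic.map_mod_nat i, Nat.mod_one]
  | m + 2, g, hg, _ => by
    have ih := fun f (hf : IsCyclicChain (FenceStep κ) (m + 1) f) => label_eq hκ hf m.succ_pos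
    by_cases hs : ∃ k, FenceStep κ (g k) (g (k + 2))
    · obtain ⟨k, hk⟩ := hs
      exact hg.label_eq_of_shortcut hκ hk ih
    · exact hg.label_eq_of_no_shortcut hκ (not_exists.mp hs) ih

theorem label_eq_of_reflTransGen_fenceStep (hκ : ∀ c, (κ ⁻¹' {c}).OrdConnected) {a b : α × β}
    (h₁ : ReflTransGen (FenceStep κ) a b) (h₂ : ReflTransGen (FenceStep κ) b a) : κ a = κ b := by
  by_cases hab : a = b
  · rw [hab]
  obtain ⟨n, g, k, hn, hg, rfl, rfl⟩ := IsCyclicChain.exists_of_reflTransGen hab h₁ h₂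
  exact (hg.label_eq hκ hn k).symm

end Plane

section Chambers

variable {P : Type} [Preorder P] {C : P → Set P}

theorem ordConnected_preimage_of_posetConvex (hmem : ∀ j, j ∈ C j)
    (hpart : ∀ j k, k ∈ C j → C k = C j) (hconv : ∀ j, PosetConvex (C j)) (A : Set P) :
    (C ⁻¹' {A}).OrdConnected :=
  ⟨fun x hx y hy z hz => by
    have hy' : y ∈ C x := (hy.trans hx.symm : C y = C x) ▸ hmem y
    exact (hpart x z (hconv x x (hmem x) y hy' z hz.1 hz.2)).trans hx⟩

theorem reflTransGen_fenceStep_of_zigzag (hpart : ∀ j k, k ∈ C j → C k = C j) {j : P} :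
    ∀ {a b : C j}, Zigzag (C j) a b → ReflTransGen (FenceStep C) a b
  | _, _, .single _ => .refl
  | _, _, .consLe h z => .head (Or.inl h) (reflTransGen_fenceStep_of_zigzag hpart z)
  | a, _, .consGe (b := b) h z =>
    .head (Or.inr ⟨h, by rw [hpart j a a.2, hpart j b b.2]⟩)
      (reflTransGen_fenceStep_of_zigzag hpart z)

end Chambers

section ChamberRel

variable {C : ℝ × ℝ → Set (ℝ × ℝ)}

theorem reflTransGen_fenceStep_of_mem (hpart : ∀ j k, k ∈ C j → C k = C j)
    (hconn : ∀ j, ZigzagConnected (C j)) {A : Set (ℝ × ℝ)} (hA : A ∈ Set.range C) {a b : ℝ × ℝ}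
    (ha : a ∈ A) (hb : b ∈ A) : ReflTransGen (FenceStep C) a b := by
  obtain ⟨j, rfl⟩ := hA
  obtain ⟨z⟩ := hconn j ⟨a, ha⟩ ⟨b, hb⟩
  exact reflTransGen_fenceStep_of_zigzag hpart z

theorem reflTransGen_fenceStep_of_chamberRel (hpart : ∀ j k, k ∈ C j → C k = C j)
    (hconn : ∀ j, ZigzagConnected (C j)) {A B : Set (ℝ × ℝ)} (h : chamberRel C A B)
    {a b : ℝ × ℝ} (ha : a ∈ A) (hb : b ∈ B) : ReflTransGen (FenceStep C) a b := by
  obtain ⟨hA, hB, rfl | ⟨-, x, hx, y, hy, hxy⟩⟩ := h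
  · exact reflTransGen_fenceStep_of_mem hpart hconn hA ha hb
  · exact (reflTransGen_fenceStep_of_mem hpart hconn hA ha hx).trans
      (.head (Or.inl hxy) (reflTransGen_fenceStep_of_mem hpart hconn hB hy hb))

theorem reflTransGen_fenceStep_of_transGen_chamberRel (hmem : ∀ j, j ∈ C j)
    (hpart : ∀ j k, k ∈ C j → C k = C j) (hconn : ∀ j, ZigzagConnected (C j))
    {A B : Set (ℝ × ℝ)} (h : TransGen (chamberRel C) A B) {a b : ℝ × ℝ} (ha : a ∈ A)
    (hb : b ∈ B) : ReflTransGen (FenceStep C) a b := by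
  induction h generalizing b with
  | single h => exact reflTransGen_fenceStep_of_chamberRel hpart hconn h ha hb
  | tail _ h ih =>
    obtain ⟨j, rfl⟩ := h.1
    exact (ih (hmem j)).trans (reflTransGen_fenceStep_of_chamberRel hpart hconn h (hmem j) hb)

theorem chamberRel_reflTransGen_antisymm (hmem : ∀ j, j ∈ C j)
    (hpart : ∀ j k, k ∈ C j → C k = C j) (hconn : ∀ j, ZigzagConnected (C j))
    (hconv : ∀ j, PosetConvex (C j)) {A B : Set (ℝ × ℝ)}
    (h₁ : ReflTransGen (chamberRel C) A B) (h₂ : ReflTransGen (chamberRel C) B A) : A = B := by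
  rcases reflTransGen_iff_eq_or_transGen.mp h₁ with rfl | h₁
  · rfl
  rcases reflTransGen_iff_eq_or_transGen.mp h₂ with rfl | h₂
  · rfl
  obtain ⟨j, rfl⟩ := (TransGen.head'_iff.mp h₁).choose_spec.1.1
  obtain ⟨k, rfl⟩ := (TransGen.head'_iff.mp h₂).choose_spec.1.1
  exact label_eq_of_reflTransGen_fenceStep
    (ordConnected_preimage_of_posetConvex hmem hpart hconv)
    (reflTransGen_fenceStep_of_transGen_chamberRel hmem hpart hconn h₁ (hmem j) (hmem k))
    (reflTransGen_fenceStep_of_transGen_chamberRel hmem hpart hconn h₂ (hmem k) (hmem j))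

end ChamberRel

theorem statement10 (C : ℝ × ℝ → Set (ℝ × ℝ))
    (hmem : ∀ j, j ∈ C j)
    (hpart : ∀ j k, k ∈ C j → C k = C j)
    (hconn : ∀ j, ZigzagConnected (C j))
    (hconv : ∀ j, PosetConvex (C j)) :
    (∀ A ∈ Set.range C, Relation.ReflTransGen (chamberRel C) A A) ∧
    (∀ A B D : Set (ℝ × ℝ), Relation.ReflTransGen (chamberRel C) A B →
      Relation.ReflTransGen (chamberRel C) B D →
      Relation.ReflTransGen (chamberRel C) A D) ∧
    (∀ A B : Set (ℝ × ℝ), Relation.ReflTransGen (chamberRel C) A B →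
      Relation.ReflTransGen (chamberRel C) B A → A = B) ∧
    (∀ A B : Set (ℝ × ℝ), chamberRel C A B → chamberRel C B A → A = B) := by
  have antisymm : ∀ A B : Set (ℝ × ℝ), ReflTransGen (chamberRel C) A B →
      ReflTransGen (chamberRel C) B A → A = B :=
    fun _ _ => chamberRel_reflTransGen_antisymm hmem hpart hconn hconv
  exact ⟨fun _ _ => .refl, fun _ _ _ => .trans, antisymm,
    fun A B h₁ h₂ => antisymm A B (.single h₁) (.single h₂)⟩
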